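/- For every positive integer N, the graph G_N has tree-width at least N. -/

import Mathlib

/-- The tree-width of `G` is at most `k`: there is a tree-decomposition all of whose bags
have size at most `k + 1`. -/
def TreewidthLE {V : Type} (G : SimpleGraph V) (k : ℕ) : Prop :=
  ∃ (ι : Type) (T : SimpleGraph ι) (B : ι → Finset V),
    T.IsTree ∧
    (∀ v : V, ∃ i, v ∈ B i) ∧
    (∀ u v : V, G.Adj u v → ∃ i, u ∈ B i ∧ v ∈ B i) ∧
    (∀ (v : V) (i j : ι) (p : T.Walk i j), p.IsPath → v ∈ B i → v ∈ B j →
      ∀ m ∈ p.support, v ∈ B m) ∧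
    ∀ i, (B i).card ≤ k + 1

/-- The graph `G_N`: the disjoint union of `N` paths, each on `N` vertices
(vertex `inl (i, j)` is the `j`-th vertex of the path `P_i`), together with `N` new
vertices `inr k`, where `inr k` is adjacent to the `k`-th vertex of each path. -/
def GN (N : ℕ) : SimpleGraph (Fin N × Fin N ⊕ Fin N) :=
  SimpleGraph.fromRel fun a b =>
    match a, b with
    | Sum.inl p, Sum.inl q => p.1 = q.1 ∧ (p.2 : ℕ) + 1 = (q.2 : ℕ)
    | Sum.inl p, Sum.inr k => p.2 = k
    | _, _ => False

/-!
Let `n = N - 1`. The first `n` vertices of `P_0, …, P_{n-1}` form an `n × n` grid whose columns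
are stars centred at `u_0, …, u_{n-1}`. Its crosses (a row together with a column star), the
path `P_n` and the star of `u_n` over `P_0, …, P_{n-1}` are connected and pairwise touching: a
bramble. By the Helly property of subtrees, some bag of every tree-decomposition meets all
members of a finite bramble. A bag meeting every cross meets every row or every column star;
with `P_n` and the star of `u_n` these are `n + 2 = N + 1` pairwise disjoint sets meeting the bag.
-/

open Set Function

namespace SimpleGraph

section Trees

variable {ι : Type*} {T : SimpleGraph ι}

theorem IsAcyclic.eq_of_isPath (hT : T.IsAcyclic) {a b : ι} {p q : T.Walk a b}
    (hp : p.IsPath) (hq : q.IsPath) : p = q :=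
  congrArg Subtype.val <| (hT.subsingleton_path a b).elim ⟨p, hp⟩ ⟨q, hq⟩

theorem IsAcyclic.support_subset_of_isPath (hT : T.IsAcyclic) {a b : ι} {p : T.Walk a b}
    (hp : p.IsPath) (w : T.Walk a b) : p.support ⊆ w.support := by
  classical
  exact hT.eq_of_isPath hp w.bypass_isPath ▸ w.support_bypass_subset_support

theorem IsAcyclic.exists_mem_support_of_isPath (hT : T.IsAcyclic) {a b c : ι}
    {p : T.Walk a b} (hp : p.IsPath) {q : T.Walk b c} (hq : q.IsPath)
    {r : T.Walk a c} (hr : r.IsPath) :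
    ∃ m ∈ p.support, m ∈ q.support ∧ m ∈ r.support := by
  classical
  induction p with
  | nil => exact ⟨_, Walk.start_mem_support _, q.start_mem_support, r.start_mem_support⟩
  | @cons a a' b h p ih =>
    by_cases haq : a ∈ q.support
    · exact ⟨a, (Walk.cons h p).start_mem_support, haq, r.start_mem_support⟩
    have hp' := (Walk.cons_isPath_iff h p).1 hp
    set r' := (p.append q).bypass
    have har' : a ∉ r'.support := fun ha => by
      have := Walk.support_bypass_subset_support _ ha
      rw [Walk.mem_support_append_iff] at this
      exact this.elim hp'.2 haq
    -- by uniqueness of paths, `r` is the edge `a a'` followed by the path inside `p ++ q`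
    have hr_eq : Walk.cons h r' = r :=
      hT.eq_of_isPath ((Walk.cons_isPath_iff h r').2 ⟨(p.append q).bypass_isPath, har'⟩) hr
    obtain ⟨m, hmp, hmq, hmr⟩ := ih hp'.1 hq (p.append q).bypass_isPath
    rw [← hr_eq]
    exact ⟨m, List.mem_cons_of_mem _ hmp, hmq, List.mem_cons_of_mem _ hmr⟩

variable (T) in
def IsPathClosed (F : Set ι) : Prop :=
  ∀ ⦃a b : ι⦄ (p : T.Walk a b), p.IsPath → a ∈ F → b ∈ F → ∀ m ∈ p.support, m ∈ F

theorem isPathClosed_univ : T.IsPathClosed univ := fun _ _ _ _ _ _ m _ => mem_univ m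

theorem IsPathClosed.inter {F F' : Set ι} (hF : T.IsPathClosed F) (hF' : T.IsPathClosed F') :
    T.IsPathClosed (F ∩ F') := fun _ _ p hp ha hb m hm =>
  ⟨hF p hp ha.1 hb.1 m hm, hF' p hp ha.2 hb.2 m hm⟩

theorem IsTree.inter_inter_nonempty (hT : T.IsTree) {A B C : Set ι} (hA : T.IsPathClosed A)
    (hB : T.IsPathClosed B) (hC : T.IsPathClosed C) (hAB : (A ∩ B).Nonempty)
    (hBC : (B ∩ C).Nonempty) (hAC : (A ∩ C).Nonempty) : (A ∩ B ∩ C).Nonempty := by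
  obtain ⟨a, haB, haC⟩ := hBC
  obtain ⟨b, hbA, hbC⟩ := hAC
  obtain ⟨c, hcA, hcB⟩ := hAB
  obtain ⟨p, hp, -⟩ := hT.existsUnique_path a b
  obtain ⟨q, hq, -⟩ := hT.existsUnique_path b c
  obtain ⟨r, hr, -⟩ := hT.existsUnique_path a c
  obtain ⟨m, hmp, hmq, hmr⟩ := hT.isAcyclic.exists_mem_support_of_isPath hp hq hr
  exact ⟨m, ⟨hA q hq hbA hcA m hmq, hB r hr haB hcB m hmr⟩, hC p hp haC hbC m hmp⟩

/-- Helly property of subtrees. -/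
theorem IsTree.sInter_nonempty (hT : T.IsTree) {𝓕 : Set (Set ι)} (h𝓕 : 𝓕.Finite)
    (hclosed : ∀ F ∈ 𝓕, T.IsPathClosed F) (hmeet : ∀ F ∈ 𝓕, ∀ F' ∈ 𝓕, (F ∩ F').Nonempty) :
    (⋂₀ 𝓕).Nonempty := by
  suffices ∀ A, T.IsPathClosed A → A.Nonempty → (∀ F ∈ 𝓕, (A ∩ F).Nonempty) →
      (A ∩ ⋂₀ 𝓕).Nonempty by
    simpa using this univ isPathClosed_univ (have := hT.connected.nonempty; univ_nonempty)
      (fun F hF => by simpa using (hmeet F hF F hF))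
  induction 𝓕, h𝓕 using Finite.induction_on with
  | empty => simp
  | @insert F 𝓕 _ _ ih =>
    intro A hA hAne hAmeet
    have hF := hclosed F (mem_insert F 𝓕)
    have hAF := hAmeet F (mem_insert F 𝓕)
    rw [sInter_insert, ← inter_assoc]
    refine ih (fun F' hF' => hclosed F' (mem_insert_of_mem F hF'))
      (fun F' hF' F'' hF'' => hmeet F' (mem_insert_of_mem F hF') F'' (mem_insert_of_mem F hF''))
      _ (hA.inter hF) hAF fun F' hF' => hT.inter_inter_nonempty hA hF
        (hclosed F' (mem_insert_of_mem F hF')) hAF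
        (hmeet F (mem_insert F 𝓕) F' (mem_insert_of_mem F hF'))
        (hAmeet F' (mem_insert_of_mem F hF'))

end Trees

section Brambles

variable {V W : Type*} {G : SimpleGraph V}

theorem Connected.induce_range {H : SimpleGraph W} (hH : H.Connected) (f : H →g G) :
    (G.induce (range f)).Connected :=
  hH.map ⟨rangeFactorization f, fun h => f.map_rel h⟩ rangeFactorization_surjective

variable (G) in
def Touches (S S' : Set V) : Prop := ∃ u ∈ S, ∃ v ∈ S', u = v ∨ G.Adj u v

theorem Touches.symm {S S' : Set V} : G.Touches S S' → G.Touches S' S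
  | ⟨u, hu, v, hv, h⟩ => ⟨v, hv, u, hu, h.imp Eq.symm G.adj_symm⟩

theorem touches_self {S : Set V} (hS : S.Nonempty) : G.Touches S S :=
  ⟨hS.some, hS.some_mem, hS.some, hS.some_mem, Or.inl rfl⟩

variable (G) in
structure IsBramble (𝓑 : Set (Set V)) : Prop where
  connected : ∀ S ∈ 𝓑, (G.induce S).Connected
  touches : ∀ S ∈ 𝓑, ∀ S' ∈ 𝓑, G.Touches S S'

section TreeDecomposition

variable {ι : Type*} {T : SimpleGraph ι} {B : ι → Finset V}

def nodesMeeting (B : ι → Finset V) (S : Set V) : Set ι := {i | ∃ v ∈ S, v ∈ B i}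

theorem isPathClosed_nodesMeeting (hT : T.IsTree)
    (hedge : ∀ u v : V, G.Adj u v → ∃ i, u ∈ B i ∧ v ∈ B i)
    (hpath : ∀ (v : V) (i j : ι) (p : T.Walk i j), p.IsPath → v ∈ B i → v ∈ B j →
      ∀ m ∈ p.support, v ∈ B m)
    {S : Set V} (hS : (G.induce S).Preconnected) :
    T.IsPathClosed (nodesMeeting B S) := by
  suffices key : ∀ {x y : S} (_ : (G.induce S).Walk x y) {i j : ι} (p : T.Walk i j),
      p.IsPath → (x : V) ∈ B i → (y : V) ∈ B j → ∀ m ∈ p.support, ∃ v ∈ S, v ∈ B m by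
    rintro a b p hp ⟨u, huS, hua⟩ ⟨w, hwS, hwb⟩
    exact key (hS ⟨u, huS⟩ ⟨w, hwS⟩).some p hp hua hwb
  intro x y q
  induction q with
  | nil => exact fun p hp hi hj m hm => ⟨_, Subtype.prop _, hpath _ _ _ p hp hi hj m hm⟩
  | @cons x y z hxy q ih =>
    intro i j p hp hi hj m hm
    -- the tree path `i → j` lies on `i → n → j`, where the bag at `n` holds the first edge of `q`
    obtain ⟨n, hxn, hyn⟩ := hedge _ _ hxy
    obtain ⟨p₁, hp₁, -⟩ := hT.existsUnique_path i n
    obtain ⟨p₂, hp₂, -⟩ := hT.existsUnique_path n j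
    rcases (Walk.mem_support_append_iff _ _).1
      (hT.isAcyclic.support_subset_of_isPath hp (p₁.append p₂) hm) with hm | hm
    · exact ⟨x, x.2, hpath _ _ _ p₁ hp₁ hi hxn m hm⟩
    · exact ih p₂ hp₂ hyn hj m hm

theorem Touches.nodesMeeting_inter_nonempty (hcover : ∀ v : V, ∃ i, v ∈ B i)
    (hedge : ∀ u v : V, G.Adj u v → ∃ i, u ∈ B i ∧ v ∈ B i) {S S' : Set V}
    (h : G.Touches S S') : (nodesMeeting B S ∩ nodesMeeting B S').Nonempty := by
  obtain ⟨u, hu, v, hv, rfl | huv⟩ := h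
  · obtain ⟨i, hi⟩ := hcover u
    exact ⟨i, ⟨u, hu, hi⟩, ⟨u, hv, hi⟩⟩
  · obtain ⟨i, hui, hvi⟩ := hedge u v huv
    exact ⟨i, ⟨u, hu, hui⟩, ⟨v, hv, hvi⟩⟩

theorem IsBramble.exists_bag_meets {𝓑 : Set (Set V)} (h𝓑 : G.IsBramble 𝓑) (hfin : 𝓑.Finite)
    (hT : T.IsTree) (hcover : ∀ v : V, ∃ i, v ∈ B i)
    (hedge : ∀ u v : V, G.Adj u v → ∃ i, u ∈ B i ∧ v ∈ B i)
    (hpath : ∀ (v : V) (i j : ι) (p : T.Walk i j), p.IsPath → v ∈ B i → v ∈ B j →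
      ∀ m ∈ p.support, v ∈ B m) :
    ∃ i, ∀ S ∈ 𝓑, ∃ v ∈ S, v ∈ B i := by
  obtain ⟨i, hi⟩ := hT.sInter_nonempty (hfin.image (nodesMeeting B))
    (forall_mem_image.2 fun S hS =>
      isPathClosed_nodesMeeting hT hedge hpath (h𝓑.connected S hS).preconnected)
    (forall_mem_image.2 fun S hS => forall_mem_image.2 fun S' hS' =>
      (h𝓑.touches S hS S' hS').nodesMeeting_inter_nonempty hcover hedge)
  exact ⟨i, fun S hS => hi _ (mem_image_of_mem _ hS)⟩

end TreeDecomposition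

end Brambles

theorem IsBramble.not_treewidthLE {V : Type} {G : SimpleGraph V} {𝓑 : Set (Set V)}
    (h𝓑 : G.IsBramble 𝓑) (hfin : 𝓑.Finite) {k : ℕ}
    (horder : ∀ X : Finset V, (∀ S ∈ 𝓑, ∃ v ∈ S, v ∈ X) → k + 2 ≤ X.card) :
    ¬ TreewidthLE G k := by
  rintro ⟨ι, T, B, hT, hcover, hedge, hpath, hcard⟩
  obtain ⟨i, hi⟩ := h𝓑.exists_bag_meets hfin hT hcover hedge hpath
  have := horder (B i) hi
  have := hcard i
  omega

end SimpleGraph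

theorem Finset.card_le_card_of_pairwise_disjoint {α β : Type*} [Fintype β] {S : β → Set α}
    (hS : Pairwise (Disjoint on S)) {X : Finset α} (hX : ∀ b, ∃ v ∈ S b, v ∈ X) :
    Fintype.card β ≤ X.card := by
  choose f hfS hfX using hX
  simpa using Finset.card_le_card_of_injOn (s := univ) f (fun b _ => hfX b) fun b _ b' _ h =>
    hS.eq fun hd : Disjoint (S b) (S b') =>
      Set.disjoint_left.1 hd (hfS b) (h ▸ hfS b' : f b ∈ S b')

theorem Finset.add_two_le_card_of_pairwise_disjoint {α : Type*} {n : ℕ} {S : Fin n → Set α}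
    {A A' : Set α} (hS : Pairwise (Disjoint on S)) (hSA : ∀ k, Disjoint (S k) A)
    (hSA' : ∀ k, Disjoint (S k) A') (hAA' : Disjoint A A') {X : Finset α}
    (hXS : ∀ k, ∃ v ∈ S k, v ∈ X) (hXA : ∃ v ∈ A, v ∈ X) (hXA' : ∃ v ∈ A', v ∈ X) :
    n + 2 ≤ X.card := by
  let F : Option (Option (Fin n)) → Set α := fun o => o.elim A fun o => o.elim A' S
  have hF : Pairwise (Disjoint on F) := by
    rintro (_ | _ | k) (_ | _ | k') hne <;>
      first | exact hS (by simpa using hne) | simp_all [F, onFun, disjoint_comm]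
  have := Finset.card_le_card_of_pairwise_disjoint hF (X := X) (by
    rintro (_ | _ | k)
    exacts [hXA, hXA', hXS k])
  simp only [Fintype.card_option, Fintype.card_fin] at this
  exact this

namespace GN

open SimpleGraph Sum

theorem adj_inl_inr {N : ℕ} (i k : Fin N) : (GN N).Adj (inl (i, k)) (inr k) := by
  simp [GN]

theorem adj_inl_inl {N : ℕ} (i : Fin N) {j j' : Fin N} (h : (j : ℕ) + 1 = j') :
    (GN N).Adj (inl (i, j)) (inl (i, j')) := by
  simp only [GN, fromRel_adj, ne_eq, inl.injEq, Prod.mk.injEq, true_and]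
  exact ⟨fun hj => by omega, Or.inl h⟩

variable {n : ℕ}

/-- In `G_{n+1}`, `row i` is `P_i` without its last vertex and `colStar k` is `u_k` together
with the `k`-th vertices of `P_0, …, P_{n-1}`. -/
def row (i : Fin n) : Set (Fin (n + 1) × Fin (n + 1) ⊕ Fin (n + 1)) :=
  range fun j : Fin n => inl (i.castSucc, j.castSucc)

variable (n) in
def lastRow : Set (Fin (n + 1) × Fin (n + 1) ⊕ Fin (n + 1)) :=
  range fun j : Fin (n + 1) => inl (Fin.last n, j)

def colStar (k : Fin (n + 1)) : Set (Fin (n + 1) × Fin (n + 1) ⊕ Fin (n + 1)) :=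
  insert (inr k) (range fun i : Fin n => inl (i.castSucc, k))

def cross (i k : Fin n) : Set (Fin (n + 1) × Fin (n + 1) ⊕ Fin (n + 1)) :=
  row i ∪ colStar k.castSucc

variable (n) in
def bramble : Set (Set (Fin (n + 1) × Fin (n + 1) ⊕ Fin (n + 1))) :=
  insert (lastRow n) (insert (colStar (Fin.last n)) (range fun p : Fin n × Fin n => cross p.1 p.2))

theorem adj_inl_inl_of_pathGraph_adj {N : ℕ} (i : Fin N) {j j' : Fin N}
    (h : (pathGraph N).Adj j j') : (GN N).Adj (inl (i, j)) (inl (i, j')) := by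
  rcases pathGraph_adj.1 h with h | h
  exacts [adj_inl_inl i h, (adj_inl_inl i h).symm]

theorem connected_row (i : Fin n) : ((GN (n + 1)).induce (row i)).Connected :=
  have : Nonempty (Fin n) := ⟨i⟩
  Connected.induce_range ⟨pathGraph_preconnected n⟩
    ⟨fun j => inl (i.castSucc, j.castSucc), fun h =>
      adj_inl_inl_of_pathGraph_adj _ (by simpa [pathGraph_adj] using h)⟩

theorem connected_lastRow : ((GN (n + 1)).induce (lastRow n)).Connected :=
  Connected.induce_range (pathGraph_connected n)
    ⟨fun j => inl (Fin.last n, j), adj_inl_inl_of_pathGraph_adj _⟩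

theorem connected_colStar (k : Fin (n + 1)) : ((GN (n + 1)).induce (colStar k)).Connected := by
  refine induce_connected_of_patches (inr k) (mem_insert _ _) fun hv => ?_
  rcases hv with rfl | ⟨i, rfl⟩
  · exact ⟨{inr k}, by simp [colStar], rfl, rfl, Reachable.refl _⟩
  · refine ⟨{inr k, inl (i.castSucc, k)}, by simp [colStar], by simp, by simp, ?_⟩
    exact (induce_pair_connected_of_adj (adj_inl_inr i.castSucc k).symm).preconnected _ _

theorem connected_cross (i k : Fin n) : ((GN (n + 1)).induce (cross i k)).Connected :=
  induce_union_connected (connected_row i).preconnected (connected_colStar _).preconnected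
    ⟨inl (i.castSucc, k.castSucc), ⟨k, rfl⟩, mem_insert_of_mem _ ⟨i, rfl⟩⟩

theorem touches_lastRow_colStar_last : (GN (n + 1)).Touches (lastRow n) (colStar (Fin.last n)) :=
  ⟨_, ⟨Fin.last n, rfl⟩, _, mem_insert _ _, Or.inr (adj_inl_inr _ _)⟩

theorem touches_lastRow_cross (i k : Fin n) : (GN (n + 1)).Touches (lastRow n) (cross i k) :=
  ⟨_, ⟨k.castSucc, rfl⟩, _, Or.inr (mem_insert _ _), Or.inr (adj_inl_inr _ _)⟩

theorem touches_colStar_last_cross (i k : Fin n) :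
    (GN (n + 1)).Touches (colStar (Fin.last n)) (cross i k) :=
  ⟨_, mem_insert_of_mem _ ⟨i, rfl⟩, _, Or.inl ⟨⟨n - 1, by have := i.2; omega⟩, rfl⟩,
    Or.inr (adj_inl_inl _ (by have := i.2; simp; omega)).symm⟩

theorem touches_cross (i k i' k' : Fin n) : (GN (n + 1)).Touches (cross i k) (cross i' k') :=
  ⟨_, Or.inl ⟨k', rfl⟩, _, Or.inr (mem_insert_of_mem _ ⟨i, rfl⟩), Or.inl rfl⟩

theorem isBramble : (GN (n + 1)).IsBramble (bramble n) where
  connected := by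
    rintro S (rfl | rfl | ⟨⟨i, k⟩, rfl⟩)
    exacts [connected_lastRow, connected_colStar _, connected_cross i k]
  touches := by
    rintro S (rfl | rfl | ⟨⟨i, k⟩, rfl⟩) S' (rfl | rfl | ⟨⟨i', k'⟩, rfl⟩)
    exacts [touches_self (nonempty_coe_sort.1 connected_lastRow.nonempty),
      touches_lastRow_colStar_last, touches_lastRow_cross i' k', touches_lastRow_colStar_last.symm,
      touches_self (nonempty_coe_sort.1 (connected_colStar _).nonempty),
      touches_colStar_last_cross i' k',
      (touches_lastRow_cross i k).symm, (touches_colStar_last_cross i k).symm,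
      touches_cross i k i' k']

theorem pairwise_disjoint_row : Pairwise (Disjoint on row (n := n)) := by
  intro i i' hne
  simp [onFun, row, Set.disjoint_left, hne.symm]

theorem disjoint_row_lastRow (i : Fin n) : Disjoint (row i) (lastRow n) := by
  simp [row, lastRow, Set.disjoint_left, (Fin.castSucc_ne_last _).symm]

theorem disjoint_row_colStar_last (i : Fin n) : Disjoint (row i) (colStar (Fin.last n)) := by
  simp [row, colStar, Set.disjoint_left, (Fin.castSucc_ne_last _).symm]

theorem disjoint_lastRow_colStar (k : Fin (n + 1)) : Disjoint (lastRow n) (colStar k) := by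
  simp [lastRow, colStar, Set.disjoint_left]

theorem pairwise_disjoint_colStar : Pairwise (Disjoint on colStar (n := n)) := by
  intro k k' hne
  simp [onFun, colStar, Set.disjoint_left, hne, hne.symm]

theorem add_two_le_card_of_cover {X : Finset (Fin (n + 1) × Fin (n + 1) ⊕ Fin (n + 1))}
    (hX : ∀ S ∈ bramble n, ∃ v ∈ S, v ∈ X) : n + 2 ≤ X.card := by
  have hlastRow := hX _ (mem_insert _ _)
  have hlastCol := hX _ (mem_insert_of_mem _ (mem_insert _ _))
  have hcross (i k : Fin n) : ∃ v ∈ cross i k, v ∈ X :=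
    hX _ (mem_insert_of_mem _ (mem_insert_of_mem _ ⟨(i, k), rfl⟩))
  by_cases hrows : ∀ i, ∃ v ∈ row i, v ∈ X
  · exact Finset.add_two_le_card_of_pairwise_disjoint pairwise_disjoint_row disjoint_row_lastRow
      disjoint_row_colStar_last (disjoint_lastRow_colStar _) hrows hlastRow hlastCol
  · -- `X` meets each cross through a row it misses in the cross's column star
    push Not at hrows
    obtain ⟨i, hi⟩ := hrows
    have hcols (k : Fin n) : ∃ v ∈ colStar k.castSucc, v ∈ X := by
      obtain ⟨v, hv | hv, hvX⟩ := hcross i k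
      · exact absurd hvX (hi v hv)
      · exact ⟨v, hv, hvX⟩
    exact Finset.add_two_le_card_of_pairwise_disjoint
      (pairwise_disjoint_colStar.comp_of_injective (Fin.castSucc_injective n))
      (fun k => (disjoint_lastRow_colStar _).symm)
      (fun k => pairwise_disjoint_colStar (Fin.castSucc_ne_last k))
      (disjoint_lastRow_colStar _) hcols hlastRow hlastCol

end GN

/-- `G_N` has tree-width at least `N`. -/
theorem GN_treewidth_ge (N : ℕ) (hN : 1 ≤ N) : ¬ TreewidthLE (GN N) (N - 1) := by
  obtain ⟨n, rfl⟩ : ∃ n, N = n + 1 := ⟨N - 1, by omega⟩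
  exact GN.isBramble.not_treewidthLE (toFinite _) fun X hX => GN.add_two_le_card_of_cover hX
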